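/- arXiv:1906.10658 — 5 statements merged into one kernel-verified Lean document; each statement's English description precedes it below -/
import Mathlib

section
/- Let P be a countable cancellative abelian semigroup with Grothendieck group 𝔊(P), let G be a group, and let C(P,G) be the group of all functions P → G under pointwise multiplication. For h ∈ 𝔊(P) and f ∈ C(P,G) define T_h(f)(p) = f(p − h) if p − h ∈ P and T_h(f)(p) = 1_G otherwise. Define f₁ ∼ f₂ if there exists p ∈ P with f₁(q) = f₂(q) for all q ∈ P with q − p ∈ P. Then ∼ is a congruence on C(P,G), the quotient Q(P,G) := C(P,G)/∼ is a group, each T_h descends to an automorphism of Q(P,G), and h ↦ T_h is a group homomorphism 𝔊(P) → Aut(Q(P,G)). -/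
/-!
Order `P` by `p ≤ q ↔ q - p ∈ P`; this preorder is directed, so its `atTop` filter exists, and
`f₁ ∼ f₂` says exactly that `f₁ = f₂` along it. The congruence properties are then those of
eventual equality. Since `𝔾 = P - P`, for every `h` the element `q - h` is eventually in `P` and
tends to infinity with `q`, so `T_h` respects eventual equality; it is pointwise multiplicative,
and `T_{h₁ + h₂} = T_{h₁} ∘ T_{h₂}` holds at every `q` with `q - h₁ ∈ P`, hence eventually.
-/

open scoped Classical

namespace AddSubmonoid

variable {𝔾 : Type*} [AddCommGroup 𝔾] (P : AddSubmonoid 𝔾)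

def atTop : Filter P := ⨅ p : P, Filter.principal {q : P | (q : 𝔾) - p ∈ P}

variable {P}

lemma sub_mem_of_sub_add_mem {q a b : 𝔾} (h : q - (a + b) ∈ P) (hb : b ∈ P) : q - a ∈ P := by
  simpa [sub_add_eq_sub_sub, sub_add_cancel] using P.add_mem h hb

lemma eventually_atTop_iff {r : P → Prop} :
    (∀ᶠ q in P.atTop, r q) ↔ ∃ p : P, ∀ q : P, (q : 𝔾) - p ∈ P → r q := by
  refine (Filter.mem_iInf_of_directed ?_ _).trans (by simp [Set.subset_def])
  intro p₁ p₂
  refine ⟨p₁ + p₂, ?_, ?_⟩ <;> simp only [ge_iff_le, Filter.principal_mono] <;> intro q hq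
  · exact sub_mem_of_sub_add_mem hq p₂.2
  · exact sub_mem_of_sub_add_mem (by rwa [add_comm] at hq) p₁.2

variable {G : Type*} [Group G]

variable (P) in
noncomputable def shift (h : 𝔾) (f : P → G) : P → G :=
  fun q => if hq : (q : 𝔾) - h ∈ P then f ⟨(q : 𝔾) - h, hq⟩ else 1

lemma shift_apply_of_mem {h : 𝔾} (f : P → G) {q : P} (hq : (q : 𝔾) - h ∈ P) :
    P.shift h f q = f ⟨(q : 𝔾) - h, hq⟩ :=
  dif_pos hq

lemma shift_mul (h : 𝔾) (f₁ f₂ : P → G) : P.shift h (f₁ * f₂) = P.shift h f₁ * P.shift h f₂ := by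
  ext q
  simp only [shift, Pi.mul_apply]
  split_ifs <;> simp

@[simp]
lemma shift_zero (f : P → G) : P.shift 0 f = f := by
  ext q
  rw [shift_apply_of_mem f (by simp)]
  simp

lemma shift_add_apply_of_mem (h₁ h₂ : 𝔾) (f : P → G) {q : P} (hq : (q : 𝔾) - h₁ ∈ P) :
    P.shift (h₁ + h₂) f q = P.shift h₁ (P.shift h₂ f) q := by
  rw [shift_apply_of_mem _ hq]
  simp only [shift, sub_sub]

section Generating

variable (hgen : ∀ g : 𝔾, ∃ p q : 𝔾, p ∈ P ∧ q ∈ P ∧ g = p - q)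
include hgen

lemma eventually_sub_sub_mem (h : 𝔾) (p : P) : ∀ᶠ q : P in P.atTop, (q : 𝔾) - h - p ∈ P := by
  obtain ⟨a, b, ha, hb, rfl⟩ := hgen h
  refine eventually_atTop_iff.2 ⟨p + ⟨a, ha⟩, fun q hq => ?_⟩
  convert P.add_mem hq hb using 1
  push_cast
  abel

lemma eventually_sub_mem (h : 𝔾) : ∀ᶠ q : P in P.atTop, (q : 𝔾) - h ∈ P := by
  simpa using eventually_sub_sub_mem hgen h 0

lemma shift_congr (h : 𝔾) {f₁ f₂ : P → G} (hf : f₁ =ᶠ[P.atTop] f₂) :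
    P.shift h f₁ =ᶠ[P.atTop] P.shift h f₂ := by
  obtain ⟨p, hp⟩ := eventually_atTop_iff.1 hf
  filter_upwards [eventually_sub_sub_mem hgen h p, eventually_sub_mem hgen h] with q hqp hq
  rw [shift_apply_of_mem _ hq, shift_apply_of_mem _ hq]
  exact hp _ hqp

lemma shift_add_eventuallyEq (h₁ h₂ : 𝔾) (f : P → G) :
    P.shift (h₁ + h₂) f =ᶠ[P.atTop] P.shift h₁ (P.shift h₂ f) :=
  (eventually_sub_mem hgen h₁).mono fun _ hq => shift_add_apply_of_mem h₁ h₂ f hq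

lemma shift_shift_eventuallyEq_of_add_eq_zero {h₁ h₂ : 𝔾} (h : h₁ + h₂ = 0) (f : P → G) :
    P.shift h₁ (P.shift h₂ f) =ᶠ[P.atTop] f := by
  simpa [h] using (shift_add_eventuallyEq hgen h₁ h₂ f).symm

end Generating

end AddSubmonoid

theorem shift_action_on_QPG_general (𝔾 : Type) [AddCommGroup 𝔾]
    (Pm : AddSubmonoid 𝔾)
    (hgen : ∀ g : 𝔾, ∃ p q : 𝔾, p ∈ Pm ∧ q ∈ Pm ∧ g = p - q)
    (G : Type) [Group G] :
    let R : (Pm → G) → (Pm → G) → Prop := fun f₁ f₂ =>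
      ∃ p : Pm, ∀ q : Pm, (q : 𝔾) - (p : 𝔾) ∈ Pm → f₁ q = f₂ q
    let T : 𝔾 → (Pm → G) → (Pm → G) := fun h f q =>
      if hq : (q : 𝔾) - h ∈ Pm then f ⟨(q : 𝔾) - h, hq⟩ else 1
    -- `R` is an equivalence relation
    Equivalence R ∧
    -- `R` is a congruence: compatible with multiplication and inversion,
    -- so the quotient `Q(P,G)` is a group
    (∀ f₁ f₂ g₁ g₂, R f₁ g₁ → R f₂ g₂ → R (f₁ * f₂) (g₁ * g₂)) ∧
    (∀ f₁ f₂, R f₁ f₂ → R f₁⁻¹ f₂⁻¹) ∧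
    -- each `T_h` descends to the quotient
    (∀ h f₁ f₂, R f₁ f₂ → R (T h f₁) (T h f₂)) ∧
    -- the descended map is multiplicative (an endomorphism of `Q(P,G)`)
    (∀ h f₁ f₂, R (T h (f₁ * f₂)) (T h f₁ * T h f₂)) ∧
    -- `h ↦ T_h` is a homomorphism; in particular each `T_h` is invertible on the
    -- quotient (with inverse induced by `T_{-h}`), hence an automorphism
    (∀ f, R (T 0 f) f) ∧
    (∀ h₁ h₂ f, R (T (h₁ + h₂) f) (T h₁ (T h₂ f))) ∧
    (∀ h f, R (T h (T (-h) f)) f) ∧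
    (∀ h f, R (T (-h) (T h f)) f) := by
  intro R T
  have hR : R = fun f₁ f₂ => f₁ =ᶠ[Pm.atTop] f₂ :=
    funext₂ fun _ _ => propext AddSubmonoid.eventually_atTop_iff.symm
  have hT : T = Pm.shift := rfl
  rw [hR, hT]
  exact ⟨(Filter.germSetoid _ _).iseqv, fun _ _ _ _ => .mul, fun _ _ => .inv,
    fun h _ _ => Pm.shift_congr hgen h, fun h f₁ f₂ => .of_eq (Pm.shift_mul h f₁ f₂),
    fun f => .of_eq (Pm.shift_zero f), Pm.shift_add_eventuallyEq hgen,
    fun h => Pm.shift_shift_eventuallyEq_of_add_eq_zero hgen (add_neg_cancel h),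
    fun h => Pm.shift_shift_eventuallyEq_of_add_eq_zero hgen (neg_add_cancel h)⟩

/-- Let `𝔾` be the Grothendieck group of a countable cancellative abelian
semigroup `P` (realized as an additive submonoid `Pm` of `𝔾` with `𝔾 = Pm - Pm`), and `G`
a group. On `C(P,G) = Pm → G` with pointwise multiplication, the shifts
`T_h(f)(p) = f(p−h)` (if `p−h ∈ P`, else `1`) and the eventual-equality relation `R` satisfy:
`R` is a congruence (so `Q(P,G) = C(P,G)/R` is a group), each `T_h` descends to an
automorphism of `Q(P,G)`, and `h ↦ T_h` is a homomorphism `𝔾 → Aut(Q(P,G))`. -/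
theorem shift_action_on_QPG (𝔾 : Type) [AddCommGroup 𝔾] [Countable 𝔾]
    (Pm : AddSubmonoid 𝔾)
    (hgen : ∀ g : 𝔾, ∃ p q : 𝔾, p ∈ Pm ∧ q ∈ Pm ∧ g = p - q)
    (G : Type) [Group G] :
    let R : (Pm → G) → (Pm → G) → Prop := fun f₁ f₂ =>
      ∃ p : Pm, ∀ q : Pm, (q : 𝔾) - (p : 𝔾) ∈ Pm → f₁ q = f₂ q
    let T : 𝔾 → (Pm → G) → (Pm → G) := fun h f q =>
      if hq : (q : 𝔾) - h ∈ Pm then f ⟨(q : 𝔾) - h, hq⟩ else 1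
    -- `R` is an equivalence relation
    Equivalence R ∧
    -- `R` is a congruence: compatible with multiplication and inversion,
    -- so the quotient `Q(P,G)` is a group
    (∀ f₁ f₂ g₁ g₂, R f₁ g₁ → R f₂ g₂ → R (f₁ * f₂) (g₁ * g₂)) ∧
    (∀ f₁ f₂, R f₁ f₂ → R f₁⁻¹ f₂⁻¹) ∧
    -- each `T_h` descends to the quotient
    (∀ h f₁ f₂, R f₁ f₂ → R (T h f₁) (T h f₂)) ∧
    -- the descended map is multiplicative (an endomorphism of `Q(P,G)`)
    (∀ h f₁ f₂, R (T h (f₁ * f₂)) (T h f₁ * T h f₂)) ∧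
    -- `h ↦ T_h` is a homomorphism; in particular each `T_h` is invertible on the
    -- quotient (with inverse induced by `T_{-h}`), hence an automorphism
    (∀ f, R (T 0 f) f) ∧
    (∀ h₁ h₂ f, R (T (h₁ + h₂) f) (T h₁ (T h₂ f))) ∧
    (∀ h f, R (T h (T (-h) f)) f) ∧
    (∀ h f, R (T (-h) (T h f)) f) :=
  shift_action_on_QPG_general 𝔾 Pm hgen G
end

section
/- Let Λ be a row-finite source-free k-graph and let x ∈ Λ^∞ be an infinite path. Then T := {v ∈ Λ^0 : vΛx(p,p) ≠ ∅ for some p ∈ ℕ^k} is a maximal tail of Λ. -/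
/-- A (row-finite, source-free, countable) `P`-graph: a countable small category with a
degree functor `d` to `P` satisfying the unique factorization property. -/
structure PGraph (P : Type) [AddCancelCommMonoid P] where
  V : Type
  E : Type
  countableE : Countable E
  r : E → V
  s : E → V
  d : E → P
  vert : V → E
  comp : E → E → E
  r_vert : ∀ v, r (vert v) = v
  s_vert : ∀ v, s (vert v) = v
  d_vert : ∀ v, d (vert v) = 0
  comp_vert_left : ∀ e, comp (vert (r e)) e = e
  comp_vert_right : ∀ e, comp e (vert (s e)) = e
  r_comp : ∀ e f, s e = r f → r (comp e f) = r e
  s_comp : ∀ e f, s e = r f → s (comp e f) = s f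
  d_comp : ∀ e f, s e = r f → d (comp e f) = d e + d f
  comp_assoc : ∀ e f g, s e = r f → s f = r g → comp (comp e f) g = comp e (comp f g)
  factor : ∀ e a b, d e = a + b →
    ∃! pr : E × E, s pr.1 = r pr.2 ∧ comp pr.1 pr.2 = e ∧ d pr.1 = a ∧ d pr.2 = b
  rowFinite : ∀ v p, {e : E | r e = v ∧ d e = p}.Finite
  sourceFree : ∀ v p, ∃ e, r e = v ∧ d e = p

/-- A self-similar `P`-graph `(G, Λ)`: an action of `G` on `Λ` together with a
restriction map satisfying the self-similarity axioms. -/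
structure SelfSimilar (P : Type) [AddCancelCommMonoid P] (G : Type) [Group G]
    (Λ : PGraph P) where
  actV : G → Λ.V → Λ.V
  act : G → Λ.E → Λ.E
  res : G → Λ.E → G
  actV_one : ∀ v, actV 1 v = v
  actV_mul : ∀ g h v, actV (g * h) v = actV g (actV h v)
  act_one : ∀ e, act 1 e = e
  act_mul : ∀ g h e, act (g * h) e = act g (act h e)
  d_act : ∀ g e, Λ.d (act g e) = Λ.d e
  s_act : ∀ g e, Λ.s (act g e) = actV g (Λ.s e)
  r_act : ∀ g e, Λ.r (act g e) = actV g (Λ.r e)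
  act_vert : ∀ g v, act g (Λ.vert v) = Λ.vert (actV g v)
  act_comp : ∀ g e f, Λ.s e = Λ.r f →
    act g (Λ.comp e f) = Λ.comp (act g e) (act (res g e) f)
  res_vert : ∀ g v, res g (Λ.vert v) = g
  res_comp : ∀ g e f, Λ.s e = Λ.r f → res g (Λ.comp e f) = res (res g e) f
  res_one : ∀ e, res 1 e = 1
  res_mul : ∀ g h e, res (g * h) e = res g (act h e) * res h e

/-- Pseudo-freeness: `g·μ = μ` and `g|_μ = 1` imply `g = 1`. -/
def SelfSimilar.PseudoFree {P : Type} [AddCancelCommMonoid P] {G : Type} [Group G]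
    {Λ : PGraph P} (σ : SelfSimilar P G Λ) : Prop :=
  ∀ g e, σ.act g e = e → σ.res g e = 1 → g = 1

/-- An infinite path of a `P`-graph: a degree-preserving functor from `Ω_P` to `Λ`,
recorded by its segments `val p q` (only the values with `q - p ∈ P` are constrained). -/
structure InfPath (P : Type) [AddCancelCommMonoid P] (Λ : PGraph P) where
  val : P → P → Λ.E
  d_val : ∀ p a, Λ.d (val p (p + a)) = a
  vert_val : ∀ p, val p p = Λ.vert (Λ.r (val p p))
  r_val : ∀ p a, Λ.r (val p (p + a)) = Λ.r (val p p)
  s_val : ∀ p a, Λ.s (val p (p + a)) = Λ.r (val (p + a) (p + a))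
  comp_val : ∀ p a b, Λ.comp (val p (p + a)) (val (p + a) (p + a + b)) = val p (p + a + b)

/-- The segments of the infinite path `g · x`, given by `(g·x)(p,q) = g|_{x(0,p)} · x(p,q)`. -/
def actPathVal {P : Type} [AddCancelCommMonoid P] {G : Type} [Group G] {Λ : PGraph P}
    (σ : SelfSimilar P G Λ) (g : G) (x : InfPath P Λ) : P → P → Λ.E :=
  fun p q => σ.act (σ.res g (x.val 0 p)) (x.val p q)

/-- `(μ, g, ν)` is a cycline triple: `s μ = g · s ν`, and `μ (g·x) = ν x` for every
infinite path `x` with range `s ν` (expressed via cofinal initial segments). -/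
def Cycline {P : Type} [AddCancelCommMonoid P] {G : Type} [Group G] {Λ : PGraph P}
    (σ : SelfSimilar P G Λ) (μ : Λ.E) (g : G) (ν : Λ.E) : Prop :=
  Λ.s μ = σ.actV g (Λ.s ν) ∧
  ∀ x : InfPath P Λ, Λ.r (x.val 0 0) = Λ.s ν → ∀ a : P,
    Λ.comp μ (actPathVal σ g x 0 (Λ.d ν + a)) = Λ.comp ν (x.val 0 (Λ.d μ + a))

/-- A maximal tail of a `P`-graph. -/
def MaximalTail {P : Type} [AddCancelCommMonoid P] (Λ : PGraph P) (T : Set Λ.V) : Prop :=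
  T.Nonempty ∧
  (∀ v ∈ T, ∀ w, (∃ e, Λ.r e = w ∧ Λ.s e = v) → w ∈ T) ∧
  (∀ v ∈ T, ∀ p, ∃ e, Λ.r e = v ∧ Λ.d e = p ∧ Λ.s e ∈ T) ∧
  (∀ v₁ ∈ T, ∀ v₂ ∈ T, ∃ w ∈ T,
    (∃ e, Λ.r e = v₁ ∧ Λ.s e = w) ∧ (∃ f, Λ.r f = v₂ ∧ Λ.s f = w))

/-
Every vertex `v` with `vΛx(p,p) ≠ ∅` also reaches `x(p + a, p + a)` for all `a`, through the
segment `x(p, p + a)`. Hence two vertices of `T` meet at `x(p₁ + p₂, p₁ + p₂)`, and a path of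
degree `q` from `v` into `T` is the degree-`q` prefix, given by unique factorization, of a path
from `v` to `x(p + q, p + q)`.
-/

namespace PGraph

variable {P : Type} [AddCancelCommMonoid P] (Λ : PGraph P)

def Reaches (v w : Λ.V) : Prop :=
  ∃ e, Λ.r e = v ∧ Λ.s e = w

variable {Λ}

theorem reaches_refl (v : Λ.V) : Λ.Reaches v v :=
  ⟨Λ.vert v, Λ.r_vert v, Λ.s_vert v⟩

theorem Reaches.trans {u v w : Λ.V} (huv : Λ.Reaches u v) (hvw : Λ.Reaches v w) :
    Λ.Reaches u w := by
  obtain ⟨e, rfl, hse⟩ := huv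
  obtain ⟨f, rfl, rfl⟩ := hvw
  exact ⟨Λ.comp e f, Λ.r_comp e f hse, Λ.s_comp e f hse⟩

theorem exists_prefix_reaches_source (μ : Λ.E) {a b : P} (hμ : Λ.d μ = a + b) :
    ∃ e, Λ.r e = Λ.r μ ∧ Λ.d e = a ∧ Λ.Reaches (Λ.s e) (Λ.s μ) := by
  obtain ⟨⟨e, f⟩, ⟨hef, rfl, hde, -⟩, -⟩ := Λ.factor μ a b hμ
  exact ⟨e, (Λ.r_comp e f hef).symm, hde, f, hef.symm, (Λ.s_comp e f hef).symm⟩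

end PGraph

namespace InfPath

variable {P : Type} [AddCancelCommMonoid P] {Λ : PGraph P}

def reachingSet (x : InfPath P Λ) : Set Λ.V :=
  {v | ∃ p, Λ.Reaches v (Λ.r (x.val p p))}

theorem reaches_r_val_add (x : InfPath P Λ) (p a : P) :
    Λ.Reaches (Λ.r (x.val p p)) (Λ.r (x.val (p + a) (p + a))) :=
  ⟨x.val p (p + a), x.r_val p a, x.s_val p a⟩

theorem r_val_mem_reachingSet (x : InfPath P Λ) (p : P) : Λ.r (x.val p p) ∈ x.reachingSet :=
  ⟨p, PGraph.reaches_refl _⟩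

theorem mem_reachingSet_of_reaches (x : InfPath P Λ) {v w : Λ.V} (hvw : Λ.Reaches v w)
    (hw : w ∈ x.reachingSet) : v ∈ x.reachingSet :=
  hw.imp fun _ ↦ hvw.trans

theorem exists_degree_mem_reachingSet (x : InfPath P Λ) {v : Λ.V} (hv : v ∈ x.reachingSet)
    (q : P) : ∃ e, Λ.r e = v ∧ Λ.d e = q ∧ Λ.s e ∈ x.reachingSet := by
  obtain ⟨p, e, rfl, hse⟩ := hv
  have hse' : Λ.s e = Λ.r (x.val p (p + q)) := by rw [hse, x.r_val]
  have hdeg : Λ.d (Λ.comp e (x.val p (p + q))) = q + Λ.d e := by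
    rw [Λ.d_comp _ _ hse', x.d_val, add_comm]
  obtain ⟨f, hrf, hdf, hreach⟩ := PGraph.exists_prefix_reaches_source _ hdeg
  refine ⟨f, by rw [hrf, Λ.r_comp _ _ hse'], hdf, p + q, ?_⟩
  rwa [Λ.s_comp _ _ hse', x.s_val] at hreach

theorem reaches_of_mem_reachingSet (x : InfPath P Λ) {v : Λ.V} (hv : v ∈ x.reachingSet) :
    ∃ p, ∀ a, Λ.Reaches v (Λ.r (x.val (p + a) (p + a))) := by
  obtain ⟨p, hp⟩ := hv
  exact ⟨p, fun a ↦ hp.trans (x.reaches_r_val_add p a)⟩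

theorem maximalTail_reachingSet (x : InfPath P Λ) : MaximalTail Λ x.reachingSet := by
  refine ⟨⟨_, x.r_val_mem_reachingSet 0⟩, fun v hv w hwv ↦ x.mem_reachingSet_of_reaches hwv hv,
    fun v hv q ↦ x.exists_degree_mem_reachingSet hv q, fun v₁ hv₁ v₂ hv₂ ↦ ?_⟩
  obtain ⟨p₁, hp₁⟩ := x.reaches_of_mem_reachingSet hv₁
  obtain ⟨p₂, hp₂⟩ := x.reaches_of_mem_reachingSet hv₂
  refine ⟨_, x.r_val_mem_reachingSet (p₁ + p₂), hp₁ p₂, ?_⟩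
  rw [add_comm p₁]
  exact hp₂ p₁

end InfPath

/-- For a row-finite source-free `k`-graph `Λ` and an infinite path `x`,
the set `T = {v : vΛx(p,p) ≠ ∅ for some p}` is a maximal tail of `Λ`. -/
theorem maximalTail_of_infinite_path (k : ℕ) (Λ : PGraph (Fin k → ℕ))
    (x : InfPath (Fin k → ℕ) Λ) :
    MaximalTail Λ
      {v | ∃ (p : Fin k → ℕ) (e : Λ.E), Λ.r e = v ∧ Λ.s e = Λ.r (x.val p p)} :=
  x.maximalTail_reachingSet
end

section
/- Let (G,Λ) be a self-similar k-graph with g·v = v for all g ∈ G, v ∈ Λ^0, and let H ⊊ Λ^0 be G-hereditary and G-saturated. Then Λ(Λ^0 \ H) := {μ ∈ Λ : s(μ) ∉ H} is a row-finite source-free k-graph with vertex set Λ^0 \ H (with composition, range and source inherited from Λ, where the range of μ is taken in Λ^0 \ H), and the G-action and restriction map descend to make (G, Λ(Λ^0 \ H)) a self-similar k-graph. -/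
namespace PGraph

variable {P : Type} [AddCancelCommMonoid P] (Λ : PGraph P) (H : Set Λ.V)

open Classical in
/-- Non-composable pairs are sent to their first entry; the `PGraph` axioms only constrain
composable pairs. -/
noncomputable def restrictComp (e f : {e : Λ.E // Λ.s e ∉ H}) : {e : Λ.E // Λ.s e ∉ H} :=
  if h : Λ.s e.1 = Λ.r f.1 then ⟨Λ.comp e.1 f.1, by rw [Λ.s_comp _ _ h]; exact f.2⟩ else e

variable {Λ H} in
theorem val_restrictComp {e f : {e : Λ.E // Λ.s e ∉ H}} (h : Λ.s e.1 = Λ.r f.1) :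
    (Λ.restrictComp H e f).1 = Λ.comp e.1 f.1 := by
  simp only [restrictComp, dif_pos h]

/-- The `P`-graph `Λ(Λ⁰ \ H)` of paths whose source lies outside `H`. -/
noncomputable def restrictCompl (hher : ∀ e : Λ.E, Λ.r e ∈ H → Λ.s e ∈ H)
    (hsat : ∀ e : Λ.E, Λ.s e ∈ H → Λ.r e ∈ H) : PGraph P where
  V := {v : Λ.V // v ∉ H}
  E := {e : Λ.E // Λ.s e ∉ H}
  countableE := by have := Λ.countableE; infer_instance
  r e := ⟨Λ.r e.1, fun h => e.2 (hher e.1 h)⟩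
  s e := ⟨Λ.s e.1, e.2⟩
  d e := Λ.d e.1
  vert v := ⟨Λ.vert v.1, by rw [Λ.s_vert]; exact v.2⟩
  comp := Λ.restrictComp H
  r_vert v := Subtype.ext (Λ.r_vert v.1)
  s_vert v := Subtype.ext (Λ.s_vert v.1)
  d_vert v := Λ.d_vert v.1
  comp_vert_left e := Subtype.ext <| by
    rw [val_restrictComp (Λ.s_vert _)]; exact Λ.comp_vert_left e.1
  comp_vert_right e := Subtype.ext <| by
    rw [val_restrictComp (Λ.r_vert _).symm]; exact Λ.comp_vert_right e.1
  r_comp e f h := Subtype.ext <|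
    (congrArg Λ.r (val_restrictComp (congrArg Subtype.val h))).trans
      (Λ.r_comp _ _ (congrArg Subtype.val h))
  s_comp e f h := Subtype.ext <|
    (congrArg Λ.s (val_restrictComp (congrArg Subtype.val h))).trans
      (Λ.s_comp _ _ (congrArg Subtype.val h))
  d_comp e f h :=
    (congrArg Λ.d (val_restrictComp (congrArg Subtype.val h))).trans
      (Λ.d_comp _ _ (congrArg Subtype.val h))
  comp_assoc e f g hef hfg := Subtype.ext <| by
    replace hef : Λ.s e.1 = Λ.r f.1 := congrArg Subtype.val hef
    replace hfg : Λ.s f.1 = Λ.r g.1 := congrArg Subtype.val hfg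
    have hef_g : Λ.s (Λ.comp e.1 f.1) = Λ.r g.1 := by rw [Λ.s_comp _ _ hef, hfg]
    have he_fg : Λ.s e.1 = Λ.r (Λ.comp f.1 g.1) := by rw [Λ.r_comp _ _ hfg, hef]
    rw [val_restrictComp (by rw [val_restrictComp hef]; exact hef_g), val_restrictComp hef,
      val_restrictComp (by rw [val_restrictComp hfg]; exact he_fg), val_restrictComp hfg]
    exact Λ.comp_assoc _ _ _ hef hfg
  factor e a b hab := by
    obtain ⟨⟨μ, ν⟩, ⟨hμν, hcomp, hdμ, hdν⟩, huniq⟩ := Λ.factor e.1 a b hab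
    have hν : Λ.s ν ∉ H := by rw [← Λ.s_comp _ _ hμν, hcomp]; exact e.2
    have hμ : Λ.s μ ∉ H := fun h => hν (hher ν (hμν ▸ h))
    refine ⟨(⟨μ, hμ⟩, ⟨ν, hν⟩), ⟨Subtype.ext hμν, Subtype.ext ?_, hdμ, hdν⟩, ?_⟩
    · rw [val_restrictComp hμν]; exact hcomp
    · rintro ⟨μ', ν'⟩ ⟨hμν', hcomp', hdμ', hdν'⟩
      replace hμν' : Λ.s μ'.1 = Λ.r ν'.1 := congrArg Subtype.val hμν'
      replace hcomp' := congrArg Subtype.val hcomp'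
      rw [val_restrictComp hμν'] at hcomp'
      have heq := huniq (μ'.1, ν'.1) ⟨hμν', hcomp', hdμ', hdν'⟩
      exact Prod.ext (Subtype.ext (congrArg Prod.fst heq)) (Subtype.ext (congrArg Prod.snd heq))
  rowFinite v p :=
    ((Λ.rowFinite v.1 p).preimage Subtype.val_injective.injOn).subset
      fun _ ⟨hr, hd⟩ => ⟨congrArg Subtype.val hr, hd⟩
  sourceFree v p := by
    obtain ⟨e, hr, hd⟩ := Λ.sourceFree v.1 p
    exact ⟨⟨e, fun h => v.2 (hr ▸ hsat e h)⟩, Subtype.ext hr, hd⟩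

variable {Λ H} in
theorem val_restrictCompl_comp {hher : ∀ e : Λ.E, Λ.r e ∈ H → Λ.s e ∈ H}
    {hsat : ∀ e : Λ.E, Λ.s e ∈ H → Λ.r e ∈ H} {e f : {e : Λ.E // Λ.s e ∉ H}}
    (h : Λ.s e.1 = Λ.r f.1) :
    Subtype.val ((Λ.restrictCompl H hher hsat).comp e f) = Λ.comp e.1 f.1 :=
  val_restrictComp h

end PGraph

namespace SelfSimilar

variable {P : Type} [AddCancelCommMonoid P] {G : Type} [Group G] {Λ : PGraph P}
  (σ : SelfSimilar P G Λ)

noncomputable def restrictCompl (hFV : ∀ (g : G) (v : Λ.V), σ.actV g v = v) (H : Set Λ.V)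
    (hher : ∀ e : Λ.E, Λ.r e ∈ H → Λ.s e ∈ H) (hsat : ∀ e : Λ.E, Λ.s e ∈ H → Λ.r e ∈ H) :
    SelfSimilar P G (Λ.restrictCompl H hher hsat) where
  actV g v := ⟨σ.actV g v.1, by rw [hFV]; exact v.2⟩
  act g e := ⟨σ.act g e.1, by rw [σ.s_act, hFV]; exact e.2⟩
  res g e := σ.res g e.1
  actV_one v := Subtype.ext (σ.actV_one v.1)
  actV_mul g h v := Subtype.ext (σ.actV_mul g h v.1)
  act_one e := Subtype.ext (σ.act_one e.1)
  act_mul g h e := Subtype.ext (σ.act_mul g h e.1)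
  d_act g e := σ.d_act g e.1
  s_act g e := Subtype.ext (σ.s_act g e.1)
  r_act g e := Subtype.ext (σ.r_act g e.1)
  act_vert g v := Subtype.ext (σ.act_vert g v.1)
  act_comp g e f h := Subtype.ext <| by
    replace h : Λ.s e.1 = Λ.r f.1 := congrArg Subtype.val h
    have hact : Λ.s (σ.act g e.1) = Λ.r (σ.act (σ.res g e.1) f.1) := by
      rw [σ.s_act, σ.r_act, hFV, hFV, h]
    exact (congrArg (σ.act g) (PGraph.val_restrictCompl_comp h)).trans
      ((σ.act_comp g e.1 f.1 h).trans
        (PGraph.val_restrictCompl_comp (e := ⟨_, _⟩) (f := ⟨_, _⟩) hact).symm)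
  res_vert g v := σ.res_vert g v.1
  res_comp g e f h := by
    replace h : Λ.s e.1 = Λ.r f.1 := congrArg Subtype.val h
    exact (congrArg (σ.res g) (PGraph.val_restrictCompl_comp h)).trans (σ.res_comp g e.1 f.1 h)
  res_one e := σ.res_one e.1
  res_mul g h e := σ.res_mul g h e.1

end SelfSimilar

theorem quotient_graph_self_similar_general (k : ℕ) (G : Type) [Group G]
    (Λ : PGraph (Fin k → ℕ)) (σ : SelfSimilar (Fin k → ℕ) G Λ)
    (hFV : ∀ (g : G) (v : Λ.V), σ.actV g v = v)
    (H : Set Λ.V)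
    (hher : ∀ e : Λ.E, Λ.r e ∈ H → Λ.s e ∈ H)
    (hsat : ∀ e : Λ.E, Λ.s e ∈ H → Λ.r e ∈ H) :
    ∃ (Λ' : PGraph (Fin k → ℕ)) (σ' : SelfSimilar (Fin k → ℕ) G Λ')
      (iV : Λ'.V → Λ.V) (iE : Λ'.E → Λ.E),
      Function.Injective iV ∧ Function.Injective iE ∧
      Set.range iV = Hᶜ ∧ Set.range iE = {e : Λ.E | Λ.s e ∉ H} ∧
      (∀ e, Λ.r (iE e) = iV (Λ'.r e)) ∧
      (∀ e, Λ.s (iE e) = iV (Λ'.s e)) ∧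
      (∀ e, Λ.d (iE e) = Λ'.d e) ∧
      (∀ v, iE (Λ'.vert v) = Λ.vert (iV v)) ∧
      (∀ e f, Λ'.s e = Λ'.r f → iE (Λ'.comp e f) = Λ.comp (iE e) (iE f)) ∧
      (∀ g v, iV (σ'.actV g v) = σ.actV g (iV v)) ∧
      (∀ g e, iE (σ'.act g e) = σ.act g (iE e)) ∧
      (∀ g e, σ'.res g e = σ.res g (iE e)) :=
  ⟨Λ.restrictCompl H hher hsat, σ.restrictCompl hFV H hher hsat, Subtype.val, Subtype.val,
    Subtype.val_injective, Subtype.val_injective, Subtype.range_coe_subtype,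
    Subtype.range_coe_subtype, fun _ => rfl, fun _ => rfl, fun _ => rfl, fun _ => rfl,
    fun _ _ h => PGraph.val_restrictCompl_comp (congrArg Subtype.val h), fun _ _ => rfl,
    fun _ _ => rfl, fun _ _ => rfl⟩

/-- For a self-similar `k`-graph with the action fixing all vertices and
`H ⊊ Λ⁰` `G`-hereditary and `G`-saturated, `Λ(Λ⁰ \ H) = {μ : s(μ) ∉ H}` is a row-finite
source-free `k`-graph with vertex set `Λ⁰ \ H`, to which the `G`-action and restriction
map descend, making `(G, Λ(Λ⁰ \ H))` a self-similar `k`-graph. -/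
theorem quotient_graph_self_similar (k : ℕ) (G : Type) [Group G]
    (Λ : PGraph (Fin k → ℕ)) (σ : SelfSimilar (Fin k → ℕ) G Λ)
    (hFV : ∀ (g : G) (v : Λ.V), σ.actV g v = v)
    (H : Set Λ.V) (hne : H ≠ Set.univ)
    (hactH : ∀ g : G, ∀ v ∈ H, σ.actV g v ∈ H)
    (hher : ∀ e : Λ.E, Λ.r e ∈ H → Λ.s e ∈ H)
    (hsat : ∀ e : Λ.E, Λ.s e ∈ H → Λ.r e ∈ H) :
    ∃ (Λ' : PGraph (Fin k → ℕ)) (σ' : SelfSimilar (Fin k → ℕ) G Λ')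
      (iV : Λ'.V → Λ.V) (iE : Λ'.E → Λ.E),
      Function.Injective iV ∧ Function.Injective iE ∧
      Set.range iV = Hᶜ ∧ Set.range iE = {e : Λ.E | Λ.s e ∉ H} ∧
      (∀ e, Λ.r (iE e) = iV (Λ'.r e)) ∧
      (∀ e, Λ.s (iE e) = iV (Λ'.s e)) ∧
      (∀ e, Λ.d (iE e) = Λ'.d e) ∧
      (∀ v, iE (Λ'.vert v) = Λ.vert (iV v)) ∧
      (∀ e f, Λ'.s e = Λ'.r f → iE (Λ'.comp e f) = Λ.comp (iE e) (iE f)) ∧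
      (∀ g v, iV (σ'.actV g v) = σ.actV g (iV v)) ∧
      (∀ g e, iE (σ'.act g e) = σ.act g (iE e)) ∧
      (∀ g e, σ'.res g e = σ.res g (iE e)) :=
  quotient_graph_self_similar_general k G Λ σ hFV H hher hsat
end

section
/- Let A be a C*-algebra and τ: A⁺ → [0,∞] a trace (additive, positively homogeneous, and satisfying τ(a*a) = τ(aa*) for all a ∈ A). If τ is densely defined (i.e., {a ∈ A⁺ : τ(a) < ∞} is dense in A⁺) and lower semicontinuous, then τ is semifinite: for every a ∈ A⁺, τ(a) = sup{τ(b) : 0 ≤ b ≤ a, τ(b) < ∞}. -/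
open scoped ENNReal

open Set CFC

/-!
Fix `a ≥ 0` and `l > 0`. For `d ≥ 0` put `e = d (l + d)⁻¹` and `b = √a e √a`. Since
`0 ≤ e ≤ 1` we have `0 ≤ b ≤ a`, and the trace property gives
`τ b = τ (√e a √e) ≤ ‖a‖ τ e ≤ ‖a‖ l⁻¹ τ d`, so `b` has finite trace when `d` does. By density and
continuity of the functional calculus, such `b` approximate `√a · a (l + a)⁻¹ · √a`, which lies
within `l` of `a`. Hence `a` is in the closure of `{b | 0 ≤ b ≤ a, τ b < ∞}`, and lower
semicontinuity bounds `τ a` by the supremum over that set.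
-/

theorem LowerSemicontinuousOn.le_iSup₂_of_mem_closure {X γ : Type*} [TopologicalSpace X]
    [CompleteLinearOrder γ] {f : X → γ} {s t : Set X} {x : X} (hf : LowerSemicontinuousOn f t)
    (hst : s ⊆ t) (hxt : x ∈ t) (hx : x ∈ closure s) : f x ≤ ⨆ y ∈ s, f y := by
  by_contra! h
  have := mem_closure_iff_nhdsWithin_neBot.1 hx
  obtain ⟨y, hlt, hy⟩ :=
    (((hf x hxt _ h).filter_mono (nhdsWithin_mono x hst)).and self_mem_nhdsWithin).exists
  exact hlt.not_ge (le_iSup₂ (f := fun y (_ : y ∈ s) => f y) y hy)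

theorem trace_mono {A : Type*} [AddCommGroup A] [PartialOrder A] [IsOrderedAddMonoid A]
    {τ : A → ℝ≥0∞} (hadd : ∀ a b : A, 0 ≤ a → 0 ≤ b → τ (a + b) = τ a + τ b)
    {x y : A} (hx : 0 ≤ x) (hxy : x ≤ y) : τ x ≤ τ y := by
  calc τ x ≤ τ x + τ (y - x) := le_self_add
    _ = τ y := by rw [← hadd x (y - x) hx (sub_nonneg.2 hxy), add_sub_cancel]

theorem trace_smul {A : Type*} [AddCommGroup A] [Module ℂ A] [PartialOrder A]
    {τ : A → ℝ≥0∞} (hsmul : ∀ (a : A) (c : ℝ), 0 ≤ a → 0 ≤ c →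
      τ ((c : ℂ) • a) = ENNReal.ofReal c * τ a) {c : ℝ} (hc : 0 ≤ c) {a : A} (ha : 0 ≤ a) :
    τ (c • a) = ENNReal.ofReal c * τ a := by
  rw [← Complex.coe_smul, hsmul a c ha hc]

section CStarAlgebra

variable {A : Type*} [CStarAlgebra A] [PartialOrder A] [StarOrderedRing A]

noncomputable def cutoff (l : ℝ) (d : A) : A := cfc (fun t : ℝ => t / (l + t)) d

variable {l : ℝ} {a d : A}

lemma continuousOn_div_const_add (hl : 0 < l) (hd : 0 ≤ d) :
    ContinuousOn (fun t : ℝ => t / (l + t)) (spectrum ℝ d) :=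
  continuousOn_id.div (continuousOn_const.add continuousOn_id) fun _ ht =>
    (add_pos_of_pos_of_nonneg hl (spectrum_nonneg_of_nonneg hd ht)).ne'

lemma cutoff_nonneg (hl : 0 ≤ l) (hd : 0 ≤ d) : 0 ≤ cutoff l d :=
  cfc_nonneg fun _ ht =>
    have ht0 := spectrum_nonneg_of_nonneg hd ht
    div_nonneg ht0 (add_nonneg hl ht0)

lemma cutoff_le_one (hl : 0 ≤ l) (hd : 0 ≤ d) : cutoff l d ≤ 1 :=
  cfc_le_one _ _ fun _ ht =>
    have ht0 := spectrum_nonneg_of_nonneg hd ht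
    div_le_one_of_le₀ (le_add_of_nonneg_left hl) (add_nonneg hl ht0)

lemma cutoff_le_inv_smul (hl : 0 < l) (hd : 0 ≤ d) : cutoff l d ≤ l⁻¹ • d := by
  have hcfc : cfc (fun t : ℝ => l⁻¹ * t) d = l⁻¹ • d := by
    rw [cfc_const_mul l⁻¹ (fun t : ℝ => t) d, cfc_id' ℝ d]
  refine (cfc_mono (fun t ht => ?_) (continuousOn_div_const_add hl hd)).trans_eq hcfc
  rw [← div_eq_inv_mul]
  exact div_le_div_of_nonneg_left (spectrum_nonneg_of_nonneg hd ht) hl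
    (le_add_of_nonneg_right (spectrum_nonneg_of_nonneg hd ht))

lemma norm_sub_sqrt_mul_cutoff_mul_sqrt_le (hl : 0 < l) (ha : 0 ≤ a) :
    ‖a - sqrt a * cutoff l a * sqrt a‖ ≤ l := by
  have hf := continuousOn_div_const_add hl ha
  have hsqrt : sqrt a = cfc Real.sqrt a := by
    rw [sqrt_eq_real_sqrt a ha, cfcₙ_eq_cfc]
  rw [hsqrt, cutoff, ← cfc_mul _ _ a, ← cfc_mul _ _ a]
  nth_rw 1 [← cfc_id' ℝ a]
  rw [← cfc_sub _ _ a]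
  refine norm_cfc_le hl.le fun t ht => ?_
  have ht0 := spectrum_nonneg_of_nonneg ha ht
  have hlt : 0 < l + t := add_pos_of_pos_of_nonneg hl ht0
  have heq : t - √t * (t / (l + t)) * √t = l * (t / (l + t)) := by
    rw [mul_right_comm, Real.mul_self_sqrt ht0]
    field_simp
    ring
  rw [heq, Real.norm_of_nonneg (by positivity)]
  exact mul_le_of_le_one_right hl.le (div_le_one_of_le₀ (le_add_of_nonneg_left hl.le) hlt.le)

lemma continuousOn_cutoff (hl : 0 < l) : ContinuousOn (cutoff (A := A) l) {d | 0 ≤ d} := by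
  refine ContinuousOn.cfc_of_mem_nhdsSet (s := Ioi (-l)) _ ?_ continuousOn_id
    (fun d hd => IsSelfAdjoint.of_nonneg hd) ?_
  · refine isOpen_Ioi.mem_nhdsSet.2 (iUnion₂_subset fun d hd t ht => ?_)
    exact (neg_neg_of_pos hl).trans_le (spectrum_nonneg_of_nonneg hd ht)
  · exact continuousOn_id.div (continuousOn_const.add continuousOn_id) fun _ ht =>
      (neg_lt_iff_pos_add'.1 ht).ne'

lemma sqrt_mul_mul_sqrt_le_self {e : A} (he : e ≤ 1) (ha : 0 ≤ a) : sqrt a * e * sqrt a ≤ a :=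
  (conjugate_le_conjugate_of_nonneg he (sqrt_nonneg a)).trans_eq <| by
    rw [mul_one, sqrt_mul_sqrt_self a ha]

variable {τ : A → ℝ≥0∞}

lemma trace_sqrt_mul_mul_sqrt_le
    (hadd : ∀ a b : A, 0 ≤ a → 0 ≤ b → τ (a + b) = τ a + τ b)
    (hsmul : ∀ (a : A) (c : ℝ), 0 ≤ a → 0 ≤ c →
      τ ((c : ℂ) • a) = ENNReal.ofReal c * τ a)
    (htr : ∀ a : A, τ (star a * a) = τ (a * star a)) {e : A} (ha : 0 ≤ a) (he : 0 ≤ e) :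
    τ (sqrt a * e * sqrt a) ≤ ENNReal.ofReal ‖a‖ * τ e := by
  have hstar : ∀ x : A, star (sqrt x) = sqrt x := fun x => (sqrt_nonneg x).isSelfAdjoint.star_eq
  set x := sqrt e * sqrt a
  have hx : star x * x = sqrt a * e * sqrt a := by
    conv_rhs => rw [← sqrt_mul_sqrt_self e he]
    simp only [x, star_mul, hstar, mul_assoc]
  have hx' : x * star x = star (sqrt e) * a * sqrt e := by
    conv_rhs => rw [← sqrt_mul_sqrt_self a ha]
    simp only [x, star_mul, hstar, mul_assoc]
  calc τ (sqrt a * e * sqrt a) = τ (star (sqrt e) * a * sqrt e) := by rw [← hx, htr, hx']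
    _ ≤ τ (‖a‖ • (star (sqrt e) * sqrt e)) :=
        trace_mono hadd (star_left_conjugate_nonneg ha _)
          (CStarAlgebra.star_left_conjugate_le_norm_smul (a := sqrt e))
    _ = ENNReal.ofReal ‖a‖ * τ e := by
        rw [hstar, sqrt_mul_sqrt_self e he, trace_smul hsmul (norm_nonneg a) he]

lemma trace_cutoff_le
    (hadd : ∀ a b : A, 0 ≤ a → 0 ≤ b → τ (a + b) = τ a + τ b)
    (hsmul : ∀ (a : A) (c : ℝ), 0 ≤ a → 0 ≤ c →
      τ ((c : ℂ) • a) = ENNReal.ofReal c * τ a) (hl : 0 < l) (hd : 0 ≤ d) :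
    τ (cutoff l d) ≤ ENNReal.ofReal l⁻¹ * τ d :=
  (trace_mono hadd (cutoff_nonneg hl.le hd) (cutoff_le_inv_smul hl hd)).trans_eq
    (trace_smul hsmul (inv_nonneg.2 hl.le) hd)

lemma mem_closure_setOf_le_trace_lt_top
    (hadd : ∀ a b : A, 0 ≤ a → 0 ≤ b → τ (a + b) = τ a + τ b)
    (hsmul : ∀ (a : A) (c : ℝ), 0 ≤ a → 0 ≤ c →
      τ ((c : ℂ) • a) = ENNReal.ofReal c * τ a)
    (htr : ∀ a : A, τ (star a * a) = τ (a * star a))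
    (hdense : {a : A | 0 ≤ a} ⊆ closure {a : A | 0 ≤ a ∧ τ a < ⊤}) (ha : 0 ≤ a) :
    a ∈ closure {b | 0 ≤ b ∧ b ≤ a ∧ τ b < ⊤} := by
  set F := {b | 0 ≤ b ∧ b ≤ a ∧ τ b < ⊤}
  have happrox : ∀ l > 0, sqrt a * cutoff l a * sqrt a ∈ closure F := by
    intro l hl
    have hcont : ContinuousOn (fun d => sqrt a * cutoff l d * sqrt a) {d : A | 0 ≤ d} :=
      ((continuousOn_cutoff hl).const_mul _).mul continuousOn_const
    refine ((hcont a ha).mono fun d hd => hd.1).mem_closure (hdense ha) fun d ⟨hd, hτd⟩ => ?_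
    refine ⟨conjugate_nonneg_of_nonneg (cutoff_nonneg hl.le hd) (sqrt_nonneg a),
      sqrt_mul_mul_sqrt_le_self (cutoff_le_one hl.le hd) ha, ?_⟩
    calc τ (sqrt a * cutoff l d * sqrt a)
        ≤ ENNReal.ofReal ‖a‖ * (ENNReal.ofReal l⁻¹ * τ d) :=
          (trace_sqrt_mul_mul_sqrt_le hadd hsmul htr ha (cutoff_nonneg hl.le hd)).trans
            (mul_le_mul_right (trace_cutoff_le hadd hsmul hl hd) _)
      _ < ⊤ := by finiteness
  rw [← closure_closure]
  refine Metric.mem_closure_iff.2 fun ε hε => ⟨_, happrox (ε / 2) (half_pos hε), ?_⟩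
  rw [dist_eq_norm]
  exact (norm_sub_sqrt_mul_cutoff_mul_sqrt_le (half_pos hε) ha).trans_lt (half_lt_self hε)

end CStarAlgebra

/-- A densely defined, lower semicontinuous trace on a C*-algebra is
semifinite. -/
theorem trace_semifinite (A : Type) [NormedRing A] [StarRing A] [CStarRing A]
    [CompleteSpace A] [NormedAlgebra ℂ A] [StarModule ℂ A]
    [PartialOrder A] [StarOrderedRing A]
    (τ : A → ℝ≥0∞)
    (hadd : ∀ a b : A, 0 ≤ a → 0 ≤ b → τ (a + b) = τ a + τ b)
    (hsmul : ∀ (a : A) (c : ℝ), 0 ≤ a → 0 ≤ c →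
      τ ((c : ℂ) • a) = ENNReal.ofReal c * τ a)
    (htr : ∀ a : A, τ (star a * a) = τ (a * star a))
    (hdense : {a : A | 0 ≤ a} ⊆ closure {a : A | 0 ≤ a ∧ τ a < ⊤})
    (hlsc : ∀ r : ℝ≥0∞, IsOpen {a : {x : A // 0 ≤ x} | r < τ a.val}) :
    ∀ a : A, 0 ≤ a → τ a = ⨆ (b : A) (_ : 0 ≤ b ∧ b ≤ a ∧ τ b < ⊤), τ b := by
  let _ : CStarAlgebra A := {}
  have hτ : LowerSemicontinuousOn τ {x | 0 ≤ x} :=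
    lowerSemicontinuous_restrict_iff.1 (lowerSemicontinuous_iff_isOpen_preimage.2 hlsc)
  intro a ha
  refine le_antisymm ?_ (iSup₂_le fun b hb => trace_mono hadd hb.1 hb.2.1)
  exact hτ.le_iSup₂_of_mem_closure (fun b hb => hb.1) ha
    (mem_closure_setOf_le_trace_lt_top hadd hsmul htr hdense ha)
end

section
/- Let (G,Λ) be a pseudo-free self-similar k-graph with g·v = v for all g ∈ G, v ∈ Λ^0, in which every cycline triple is a cycline pair. Define μ ∼ ν for μ, ν ∈ Λ if (μ, 1_G, ν) is a cycline pair. Then ∼ is an equivalence relation on Λ, and setting g·[μ] := [g·μ] and g|_{[μ]} := g|_μ gives well-defined operations: if μ ∼ ν then g·μ ∼ g·ν and g|_μ = g|_ν. -/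
variable {P : Type} [AddCancelCommMonoid P] {G : Type} [Group G] {Λ : PGraph P}

namespace PGraph

theorem eq_of_comp_eq_comp (Λ : PGraph P) {α β γ δ : Λ.E}
    (hαβ : Λ.s α = Λ.r β) (hγδ : Λ.s γ = Λ.r δ)
    (h : Λ.comp α β = Λ.comp γ δ) (hd : Λ.d α = Λ.d γ) : α = γ := by
  obtain ⟨_, -, huniq⟩ := Λ.factor (Λ.comp α β) (Λ.d α) (Λ.d β) (Λ.d_comp α β hαβ)
  have hdδ : Λ.d δ = Λ.d β := by
    have : Λ.d γ + Λ.d δ = Λ.d γ + Λ.d β := by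
      rw [← Λ.d_comp γ δ hγδ, ← h, Λ.d_comp α β hαβ, hd]
    exact add_left_cancel this
  exact congrArg Prod.fst <|
    (huniq (α, β) ⟨hαβ, rfl, rfl, rfl⟩).trans (huniq (γ, δ) ⟨hγδ, h.symm, hd.symm, hdδ⟩).symm

end PGraph

namespace InfPath

theorem d_val_zero (x : InfPath P Λ) (q : P) : Λ.d (x.val 0 q) = q := by
  simpa only [zero_add] using x.d_val 0 q

theorem r_val_zero (x : InfPath P Λ) (q : P) : Λ.r (x.val 0 q) = Λ.r (x.val 0 0) := by
  simpa only [zero_add] using x.r_val 0 q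

theorem s_val_zero (x : InfPath P Λ) (q : P) : Λ.s (x.val 0 q) = Λ.r (x.val q q) := by
  simpa only [zero_add] using x.s_val 0 q

theorem comp_val_zero (x : InfPath P Λ) (p b : P) :
    Λ.comp (x.val 0 p) (x.val p (p + b)) = x.val 0 (p + b) := by
  simpa only [zero_add] using x.comp_val 0 p b

theorem s_val_zero_eq_r_val (x : InfPath P Λ) (p b : P) :
    Λ.s (x.val 0 p) = Λ.r (x.val p (p + b)) := by
  rw [s_val_zero, x.r_val]

theorem comp_val_zero_of_comp_val_zero_add (x : InfPath P Λ) {α β : Λ.E}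
    (hα : Λ.s α = Λ.r (x.val 0 0)) (hβ : Λ.s β = Λ.r (x.val 0 0)) {p q b : P}
    (hd : Λ.d α + p = Λ.d β + q)
    (h : Λ.comp α (x.val 0 (p + b)) = Λ.comp β (x.val 0 (q + b))) :
    Λ.comp α (x.val 0 p) = Λ.comp β (x.val 0 q) := by
  have hαx : Λ.s α = Λ.r (x.val 0 p) := by rw [r_val_zero, hα]
  have hβx : Λ.s β = Λ.r (x.val 0 q) := by rw [r_val_zero, hβ]
  rw [← comp_val_zero x p b, ← comp_val_zero x q b,
    ← Λ.comp_assoc _ _ _ hαx (s_val_zero_eq_r_val x p b),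
    ← Λ.comp_assoc _ _ _ hβx (s_val_zero_eq_r_val x q b)] at h
  refine Λ.eq_of_comp_eq_comp ?_ ?_ h ?_
  · rw [Λ.s_comp _ _ hαx, s_val_zero_eq_r_val]
  · rw [Λ.s_comp _ _ hβx, s_val_zero_eq_r_val]
  · rw [Λ.d_comp _ _ hαx, Λ.d_comp _ _ hβx, d_val_zero, d_val_zero, hd]

theorem res_val_zero_zero (σ : SelfSimilar P G Λ) (g : G) (x : InfPath P Λ) :
    σ.res g (x.val 0 0) = g := by
  rw [x.vert_val 0, σ.res_vert]

def act (σ : SelfSimilar P G Λ) (hFV : ∀ (g : G) (v : Λ.V), σ.actV g v = v)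
    (g : G) (x : InfPath P Λ) : InfPath P Λ where
  val := actPathVal σ g x
  d_val p a := by simp only [actPathVal, σ.d_act, x.d_val]
  vert_val p := by
    simp only [actPathVal]
    rw [x.vert_val p, σ.act_vert, Λ.r_vert]
  r_val p a := by simp only [actPathVal, σ.r_act, x.r_val]
  s_val p a := by simp only [actPathVal, σ.s_act, σ.r_act, hFV, x.s_val]
  comp_val p a b := by
    simp only [actPathVal]
    rw [← comp_val_zero x p a, σ.res_comp _ _ _ (s_val_zero_eq_r_val x p a),
      ← σ.act_comp _ _ _ (by rw [x.s_val, x.r_val]), x.comp_val]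

theorem act_val_zero (σ : SelfSimilar P G Λ) (hFV : ∀ (g : G) (v : Λ.V), σ.actV g v = v)
    (g : G) (x : InfPath P Λ) (q : P) : (x.act σ hFV g).val 0 q = σ.act g (x.val 0 q) := by
  simp only [act, actPathVal, res_val_zero_zero]

end InfPath

namespace Cycline

variable {σ : SelfSimilar P G Λ}

theorem one_iff {μ ν : Λ.E} :
    Cycline σ μ 1 ν ↔ Λ.s μ = Λ.s ν ∧
      ∀ x : InfPath P Λ, Λ.r (x.val 0 0) = Λ.s ν → ∀ a : P,
        Λ.comp μ (x.val 0 (Λ.d ν + a)) = Λ.comp ν (x.val 0 (Λ.d μ + a)) := by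
  simp only [Cycline, actPathVal, σ.res_one, σ.act_one, σ.actV_one]

theorem one_refl (μ : Λ.E) : Cycline σ μ 1 μ :=
  one_iff.2 ⟨rfl, fun _ _ _ => rfl⟩

theorem one_symm {μ ν : Λ.E} (h : Cycline σ μ 1 ν) : Cycline σ ν 1 μ := by
  obtain ⟨hs, hμν⟩ := one_iff.1 h
  exact one_iff.2 ⟨hs.symm, fun x hx a => (hμν x (hx.trans hs) a).symm⟩

theorem one_trans {μ ν ρ : Λ.E} (h₁ : Cycline σ μ 1 ν) (h₂ : Cycline σ ν 1 ρ) :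
    Cycline σ μ 1 ρ := by
  obtain ⟨hs₁, hμν⟩ := one_iff.1 h₁
  obtain ⟨hs₂, hνρ⟩ := one_iff.1 h₂
  refine one_iff.2 ⟨hs₁.trans hs₂, fun x hx a => ?_⟩
  -- Both sides extend to `μ x(0, dν + dρ + a) = ν x(0, dμ + dρ + a) = ρ x(0, dν + dμ + a)`.
  have e₂ := hνρ x hx (Λ.d μ + a)
  rw [add_left_comm (Λ.d ρ)] at e₂
  have h := (hμν x (hx.trans hs₂.symm) (Λ.d ρ + a)).trans e₂
  rw [add_comm (Λ.d ν), add_comm (Λ.d ν)] at h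
  exact x.comp_val_zero_of_comp_val_zero_add (by rw [hx, hs₁, hs₂]) hx.symm
    (add_left_comm _ _ _) h

theorem equivalence_one : Equivalence (fun μ ν : Λ.E => Cycline σ μ 1 ν) :=
  ⟨one_refl, one_symm, one_trans⟩

/-- If `μ x = ν x` for all `x`, then `(g·μ)(g|_μ · y) = g · (μ y) = g · (ν y) = (g·ν)(g|_ν · y)`;
substituting `y = (g|_ν)⁻¹ · x` gives the cycline triple. -/
theorem act_res_mul_inv_res (hFV : ∀ (g : G) (v : Λ.V), σ.actV g v = v) (g : G)
    {μ ν : Λ.E} (h : Cycline σ μ 1 ν) :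
    Cycline σ (σ.act g μ) (σ.res g μ * (σ.res g ν)⁻¹) (σ.act g ν) := by
  obtain ⟨hs, hμν⟩ := one_iff.1 h
  refine ⟨by simp only [hFV, σ.s_act, hs], fun x hx a => ?_⟩
  rw [σ.s_act, hFV] at hx
  set y := x.act σ hFV (σ.res g ν)⁻¹
  have hy : ∀ q, Λ.r (y.val 0 q) = Λ.s ν := fun q => by
    rw [InfPath.act_val_zero, σ.r_act, hFV, InfPath.r_val_zero, hx]
  have e := congrArg (σ.act g) (hμν y (hy 0) a)
  rw [σ.act_comp _ _ _ (by rw [hy, hs]), σ.act_comp _ _ _ (hy _).symm,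
    InfPath.act_val_zero, InfPath.act_val_zero, ← σ.act_mul, ← σ.act_mul, mul_inv_cancel,
    σ.act_one] at e
  rwa [σ.d_act, σ.d_act, actPathVal, InfPath.res_val_zero_zero]

end Cycline

theorem cycline_equivalence_well_defined_general (k : ℕ) (G : Type) [Group G]
    (Λ : PGraph (Fin k → ℕ)) (σ : SelfSimilar (Fin k → ℕ) G Λ)
    (hFV : ∀ (g : G) (v : Λ.V), σ.actV g v = v)
    (hcp : ∀ (μ ν : Λ.E) (g : G), Cycline σ μ g ν → g = 1) :
    Equivalence (fun μ ν : Λ.E => Cycline σ μ 1 ν) ∧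
    ∀ (g : G) (μ ν : Λ.E), Cycline σ μ 1 ν →
      Cycline σ (σ.act g μ) 1 (σ.act g ν) ∧ σ.res g μ = σ.res g ν := by
  refine ⟨Cycline.equivalence_one, fun g μ ν h => ?_⟩
  have htriple := Cycline.act_res_mul_inv_res hFV g h
  have hres : σ.res g μ = σ.res g ν := mul_inv_eq_one.1 (hcp _ _ _ htriple)
  rw [hres, mul_inv_cancel] at htriple
  exact ⟨htriple, hres⟩

/-- For a pseudo-free self-similar `k`-graph fixing all vertices, in which
every cycline triple is a cycline pair, the relation `μ ∼ ν ⟺ (μ, 1, ν)` cycline is an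
equivalence relation, and `g·[μ] := [g·μ]`, `g|_{[μ]} := g|_μ` are well defined: if
`μ ∼ ν` then `g·μ ∼ g·ν` and `g|_μ = g|_ν`. -/
theorem cycline_equivalence_well_defined (k : ℕ) (G : Type) [Group G]
    (Λ : PGraph (Fin k → ℕ)) (σ : SelfSimilar (Fin k → ℕ) G Λ)
    (hpf : σ.PseudoFree) (hFV : ∀ (g : G) (v : Λ.V), σ.actV g v = v)
    (hcp : ∀ (μ ν : Λ.E) (g : G), Cycline σ μ g ν → g = 1) :
    Equivalence (fun μ ν : Λ.E => Cycline σ μ 1 ν) ∧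
    ∀ (g : G) (μ ν : Λ.E), Cycline σ μ 1 ν →
      Cycline σ (σ.act g μ) 1 (σ.act g ν) ∧ σ.res g μ = σ.res g ν :=
  cycline_equivalence_well_defined_general k G Λ σ hFV hcp
end
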